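/- Let G be a group, H an infinite almost malnormal subgroup of G, and X an H-almost invariant subset of G. If g ∈ G is such that gX is equivalent to X or to X* (both corresponding corners H-finite), then H and gHg⁻¹ are commensurable, and hence g ∈ H. -/

import Mathlib

open scoped Pointwise

/-- A subset `A` of `G` is `H`-finite if it is contained in finitely many
right cosets `Hg` of the subgroup `H`. -/
def HFinite {G : Type*} [Group G] (H : Subgroup G) (A : Set G) : Prop :=
  ∃ F : Finset G, A ⊆ ⋃ g ∈ F, ((H : Set G) * {g} : Set G)

/-- `X` is `H`-almost invariant. -/
def AlmostInv {G : Type*} [Group G] (H : Subgroup G) (X : Set G) : Prop :=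
  (H : Set G) * X = X ∧
    ∀ g : G, HFinite H ((X \ ((X * {g} : Set G))) ∪ (((X * {g} : Set G)) \ X))

/-! If `gX` is equivalent to `X` (resp. `X*`), put `Y = gX` (resp. `(gX)*`): it is almost invariant
over `K = gHg⁻¹` and `X ∆ Y` is `H`-finite. As neither `X` nor `X*` is `H`-finite, there are
`y ∈ X` and `z ∉ X` whose orbits `Hy`, `Hz` miss the finitely many cosets covering `X ∆ Y`, so
`Hy ⊆ Y` and `Hz ∩ Y = ∅`. Then `Hy ⊆ Y ∆ Y(z⁻¹y)`, which is `K`-finite, so `H` meets some coset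
of `K` in an infinite set and `H ∩ K` is infinite. Almost malnormality gives `g ∈ H`, so `K = H`. -/

open scoped symmDiff

section

variable {G : Type*} [Group G] {H K : Subgroup G}

theorem mem_mul_singleton_iff {A : Set G} {a x : G} : x ∈ A * {a} ↔ x * a⁻¹ ∈ A := by
  rw [Set.mul_singleton, Set.image_mul_right, Set.mem_preimage]

theorem mul_mem_iff_of_coe_mul_eq {A : Set G} (hA : (H : Set G) * A = A) {h : G} (hh : h ∈ H)
    (x : G) : h * x ∈ A ↔ x ∈ A := by
  refine ⟨fun hx => ?_, fun hx => hA ▸ Set.mul_mem_mul hh hx⟩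
  rw [← hA]
  simpa using Set.mul_mem_mul (H.inv_mem hh) hx

theorem mul_mem_biUnion_cosets_iff (F : Finset G) {h : G} (hh : h ∈ H) (x : G) :
    h * x ∈ ⋃ f ∈ F, (H : Set G) * {f} ↔ x ∈ ⋃ f ∈ F, (H : Set G) * {f} := by
  simp only [Set.mem_iUnion, mem_mul_singleton_iff, SetLike.mem_coe, mul_assoc,
    H.mul_mem_cancel_left hh]

namespace HFinite

variable {A B : Set G}

theorem mono (hB : HFinite H B) (hAB : A ⊆ B) : HFinite H A :=
  let ⟨F, hF⟩ := hB; ⟨F, hAB.trans hF⟩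

theorem union (hA : HFinite H A) (hB : HFinite H B) : HFinite H (A ∪ B) := by
  classical
  obtain ⟨F₁, hF₁⟩ := hA
  obtain ⟨F₂, hF₂⟩ := hB
  refine ⟨F₁ ∪ F₂, Set.union_subset (hF₁.trans ?_) (hF₂.trans ?_)⟩ <;>
    exact Set.biUnion_subset_biUnion_left fun x hx => by simp [hx]

theorem mul_singleton (hA : HFinite H A) (b : G) : HFinite H (A * {b}) := by
  classical
  obtain ⟨F, hF⟩ := hA
  refine ⟨F.image (· * b), fun x hx => ?_⟩
  obtain ⟨f, hf, hxf⟩ := Set.mem_iUnion₂.mp (hF (mem_mul_singleton_iff.mp hx))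
  refine Set.mem_iUnion₂.mpr ⟨f * b, Finset.mem_image_of_mem _ hf, ?_⟩
  rw [mem_mul_singleton_iff] at hxf ⊢
  simpa [mul_assoc] using hxf

theorem smul (hA : HFinite H A) (g : G) :
    HFinite (H.map (MulAut.conj g).toMonoidHom) (g • A) := by
  classical
  obtain ⟨F, hF⟩ := hA
  refine ⟨F.image (g * ·), ?_⟩
  rintro _ ⟨a, ha, rfl⟩
  obtain ⟨f, hf, haf⟩ := Set.mem_iUnion₂.mp (hF ha)
  refine Set.mem_iUnion₂.mpr ⟨g * f, Finset.mem_image_of_mem _ hf, ?_⟩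
  rw [mem_mul_singleton_iff] at haf ⊢
  exact ⟨_, haf, by simp [mul_assoc]⟩

theorem infinite_inter (hK : (K : Set G).Infinite) (hHK : HFinite H K) :
    ((H : Set G) ∩ K).Infinite := by
  obtain ⟨F, hF⟩ := hHK
  obtain ⟨f, -, hf⟩ : ∃ f ∈ F, ((K : Set G) ∩ ((H : Set G) * {f})).Infinite := by
    by_contra! hfin
    refine hK ((F.finite_toSet.biUnion fun f hf => hfin f hf).subset fun k hk => ?_)
    obtain ⟨f, hf, hkf⟩ := Set.mem_iUnion₂.mp (hF hk)
    exact Set.mem_biUnion hf ⟨hk, hkf⟩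
  obtain ⟨w, hwK, hwf⟩ := hf.nonempty
  refine (hf.image (mul_left_injective w⁻¹).injOn).mono ?_
  rintro _ ⟨v, ⟨hvK, hvf⟩, rfl⟩
  rw [mem_mul_singleton_iff] at hvf hwf
  refine ⟨?_, K.mul_mem hvK (K.inv_mem hwK)⟩
  simpa [mul_assoc] using H.mul_mem hvf (H.inv_mem hwf)

end HFinite

namespace AlmostInv

variable {X : Set G}

theorem compl (hX : AlmostInv H X) : AlmostInv H Xᶜ := by
  refine ⟨Set.Subset.antisymm ?_ fun x hx => ⟨1, H.one_mem, x, hx, one_mul x⟩, fun a => ?_⟩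
  · rintro _ ⟨h, hh, x, hx, rfl⟩
    exact (mul_mem_iff_of_coe_mul_eq hX.1 hh x).not.mpr hx
  · have hcompl : Xᶜ * {a} = (X * {a})ᶜ := by
      simp only [Set.mul_singleton, Set.image_mul_right, Set.preimage_compl]
    show HFinite H (Xᶜ ∆ (Xᶜ * {a}))
    rw [hcompl, compl_symmDiff_compl]
    exact hX.2 a

theorem smul (hX : AlmostInv H X) (g : G) :
    AlmostInv (H.map (MulAut.conj g).toMonoidHom) (g • X) := by
  refine ⟨Set.Subset.antisymm ?_ fun x hx => ⟨1, Subgroup.one_mem _, x, hx, one_mul x⟩,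
    fun a => ?_⟩
  · rintro _ ⟨_, ⟨h, hh, rfl⟩, _, ⟨x, hx, rfl⟩, rfl⟩
    refine ⟨h * x, (mul_mem_iff_of_coe_mul_eq hX.1 hh x).mpr hx, ?_⟩
    simp [mul_assoc]
  · show HFinite _ ((g • X) ∆ ((g • X) * {a}))
    rw [smul_mul_assoc, ← Set.smul_set_symmDiff]
    exact (hX.2 a).smul g

end AlmostInv

theorem hFinite_of_hFinite_symmDiff {X Y : Set G} (hXinv : (H : Set G) * X = X)
    (hX : ¬ HFinite H X) (hXc : ¬ HFinite H Xᶜ) (hXY : HFinite H (X ∆ Y))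
    (hY : ∀ a : G, HFinite K (Y ∆ (Y * {a}))) : HFinite K H := by
  obtain ⟨F, hF⟩ := hXY
  obtain ⟨y, hyX, hyF⟩ := Set.not_subset.mp fun h => hX ⟨F, h⟩
  obtain ⟨z, hzX, hzF⟩ := Set.not_subset.mp fun h => hXc ⟨F, h⟩
  have hHy : ∀ h ∈ H, h * y ∈ Y := fun h hh => by
    by_contra hhy
    refine (mul_mem_biUnion_cosets_iff F hh y).not.mpr hyF (hF (Or.inl ⟨?_, hhy⟩))
    exact (mul_mem_iff_of_coe_mul_eq hXinv hh y).mpr hyX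
  have hHz : ∀ h ∈ H, h * z ∉ Y := fun h hh hhz => by
    refine (mul_mem_biUnion_cosets_iff F hh z).not.mpr hzF (hF (Or.inr ⟨hhz, ?_⟩))
    exact (mul_mem_iff_of_coe_mul_eq hXinv hh z).not.mpr hzX
  refine ((hY (z⁻¹ * y)).mul_singleton y⁻¹).mono fun h hh => ?_
  rw [mem_mul_singleton_iff, inv_inv]
  refine Or.inl ⟨hHy h hh, ?_⟩
  rw [mem_mul_singleton_iff]
  simpa [mul_assoc] using hHz h hh

end

theorem mem_of_translate_equivalent_general {G : Type*} [Group G]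
    (H : Subgroup G) (hInf : (H : Set G).Infinite)
    (hMal : ∀ g : G, (((fun h => g * h * g⁻¹) '' (H : Set G)) ∩ (H : Set G)).Infinite → g ∈ H)
    (X : Set G) (hX : AlmostInv H X) (hXnt : ¬ HFinite H X ∧ ¬ HFinite H Xᶜ)
    (g : G)
    (hEquiv : (HFinite H (((g • X : Set G)) ∩ Xᶜ) ∧ HFinite H (((g • X : Set G))ᶜ ∩ X)) ∨
              (HFinite H (((g • X : Set G)) ∩ X) ∧ HFinite H (((g • X : Set G))ᶜ ∩ Xᶜ))) :
    ((H ⊓ Subgroup.map (MulAut.conj g).toMonoidHom H).relIndex H ≠ 0 ∧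
     (H ⊓ Subgroup.map (MulAut.conj g).toMonoidHom H).relIndex
       (Subgroup.map (MulAut.conj g).toMonoidHom H) ≠ 0) ∧ g ∈ H := by
  have hHfin : HFinite (H.map (MulAut.conj g).toMonoidHom) H := by
    rcases hEquiv with ⟨hgX, hX_gX⟩ | ⟨hgX, hX_gX⟩
    · refine hFinite_of_hFinite_symmDiff hX.1 hXnt.1 hXnt.2 ?_ (hX.smul g).2
      rw [Set.symmDiff_def, Set.sdiff_eq_compl_inter, Set.sdiff_eq]
      exact hX_gX.union hgX
    · refine hFinite_of_hFinite_symmDiff hX.1 hXnt.1 hXnt.2 ?_ (hX.smul g).compl.2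
      rw [Set.symmDiff_def, Set.sdiff_eq_compl_inter, compl_compl, Set.sdiff_eq]
      exact hgX.union hX_gX
  have hg : g ∈ H := hMal g (hHfin.infinite_inter hInf)
  have hconj : H.map (MulAut.conj g).toMonoidHom = H :=
    Subgroup.mem_normalizer_iff_map_conj_eq.mp (H.le_normalizer hg)
  rw [hconj, inf_idem, Subgroup.relIndex_self]
  exact ⟨⟨one_ne_zero, one_ne_zero⟩, hg⟩

theorem mem_of_translate_equivalent {G : Type*} [Group G] (hG : Group.FG G)
    (H : Subgroup G) (hHfg : H.FG) (hInf : (H : Set G).Infinite)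
    (hMal : ∀ g : G, (((fun h => g * h * g⁻¹) '' (H : Set G)) ∩ (H : Set G)).Infinite → g ∈ H)
    (X : Set G) (hX : AlmostInv H X) (hXnt : ¬ HFinite H X ∧ ¬ HFinite H Xᶜ)
    (g : G)
    (hEquiv : (HFinite H (((g • X : Set G)) ∩ Xᶜ) ∧ HFinite H (((g • X : Set G))ᶜ ∩ X)) ∨
              (HFinite H (((g • X : Set G)) ∩ X) ∧ HFinite H (((g • X : Set G))ᶜ ∩ Xᶜ))) :
    ((H ⊓ Subgroup.map (MulAut.conj g).toMonoidHom H).relIndex H ≠ 0 ∧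
     (H ⊓ Subgroup.map (MulAut.conj g).toMonoidHom H).relIndex
       (Subgroup.map (MulAut.conj g).toMonoidHom H) ≠ 0) ∧ g ∈ H :=
  mem_of_translate_equivalent_general H hInf hMal X hX hXnt g hEquiv
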